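/- arXiv:1412.5242 — 6 statements merged into one kernel-verified Lean document; each statement's English description precedes it below -/
import Mathlib

section
/- For every integer n ≥ 1, (1/(n!·n)) · ∑_{s=0}^{n−1} (−1)^s · C(n−1,s) · (C(n,2) − n·s)^{n−1} = n^{n−3}; in particular this rational expression is n^{n-3}. -/
open Finset

lemma hw_shift (m : ℕ) (f : ℕ → ℚ) :
    ∑ s ∈ range (m+2), (-1)^s * ((m+1).choose s : ℚ) * f s
    = ∑ s ∈ range (m+1), (-1)^s * (m.choose s : ℚ) * f s
      - ∑ s ∈ range (m+1), (-1)^s * (m.choose s : ℚ) * f (s+1) := by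
  have pas : ∀ s : ℕ, ((m+1).choose (s+1) : ℚ) = m.choose s + m.choose (s+1) := by
    intro s; exact_mod_cast Nat.choose_succ_succ m s
  rw [Finset.sum_range_succ' _ (m+1), Finset.sum_range_succ' (fun s => (-1)^s * (m.choose s : ℚ) * f s) m]
  have h1 : ∑ s ∈ range (m+1), (-1)^(s+1) * (((m+1).choose (s+1) : ℚ)) * f (s+1)
      = ∑ s ∈ range (m+1), ((-1)^(s+1) * ((m.choose s : ℚ)) * f (s+1)
          + (-1)^(s+1) * ((m.choose (s+1) : ℚ)) * f (s+1)) := by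
    refine Finset.sum_congr rfl fun s _ => ?_
    rw [pas]; ring
  rw [h1, Finset.sum_add_distrib]
  have h2 : ∑ s ∈ range (m+1), (-1)^(s+1) * ((m.choose (s+1) : ℚ)) * f (s+1)
      = ∑ s ∈ range m, (-1)^(s+1) * ((m.choose (s+1) : ℚ)) * f (s+1) := by
    rw [Finset.sum_range_succ, Nat.choose_succ_self]
    push_cast; ring
  have h3 : ∑ s ∈ range (m+1), (-1)^(s+1) * ((m.choose s : ℚ)) * f (s+1)
      = - ∑ s ∈ range (m+1), (-1)^s * ((m.choose s : ℚ)) * f (s+1) := by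
    rw [← Finset.sum_neg_distrib]
    refine Finset.sum_congr rfl fun s _ => by ring
  rw [h2, h3]
  simp only [Nat.choose_zero_right, pow_zero, Nat.cast_one]
  ring

lemma hw_key : ∀ m : ℕ, ∀ j : ℕ, j ≤ m → ∀ c : ℚ,
    ∑ s ∈ range (m+1), (-1)^s * (m.choose s : ℚ) * (c - s)^j
    = if j = m then (m.factorial : ℚ) else 0 := by
  intro m
  induction m with
  | zero =>
    intro j hj c
    interval_cases j
    simp
  | succ m ih =>
    intro j hj c
    have hs := hw_shift m (fun s => (c - s)^j)
    rcases Nat.lt_succ_iff_lt_or_eq.mp (Nat.lt_succ_of_le hj) with hj' | hj'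
    · -- j ≤ m
      have hj2 : j ≤ m := Nat.lt_succ_iff.mp hj'
      have e2 : ∑ s ∈ range (m+1), (-1)^s * (m.choose s : ℚ) * (c - ((s+1:ℕ):ℚ))^j
          = ∑ s ∈ range (m+1), (-1)^s * (m.choose s : ℚ) * ((c-1) - s)^j := by
        refine Finset.sum_congr rfl fun s _ => by push_cast; ring_nf
      rw [hs, e2, ih j hj2 c, ih j hj2 (c-1), sub_self, if_neg (by omega)]
    · -- j = m + 1
      subst hj'
      rw [if_pos rfl, hs]
      have expand : ∀ a : ℚ, a^(m+1) - (a-1)^(m+1)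
          = ∑ k ∈ range (m+1), a^k * (-1)^(m-k) * ((m+1).choose k : ℚ) := by
        intro a
        have hb : (a + (-1))^(m+1) = ∑ k ∈ range (m+2), a^k * (-1)^(m+1-k) * ((m+1).choose k : ℚ) :=
          add_pow a (-1) (m+1)
        have : (a-1)^(m+1) = ∑ k ∈ range (m+2), a^k * (-1)^(m+1-k) * ((m+1).choose k : ℚ) := by
          rw [← hb]; ring_nf
        rw [this, Finset.sum_range_succ]
        simp only [Nat.sub_self, pow_zero, Nat.choose_self, Nat.cast_one, mul_one]
        have h4 : ∀ k ∈ range (m+1), a^k * (-1:ℚ)^(m+1-k) * ((m+1).choose k : ℚ)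
            = -(a^k * (-1)^(m-k) * ((m+1).choose k : ℚ)) := by
          intro k hk
          have hk' : k ≤ m := Nat.lt_succ_iff.mp (Finset.mem_range.mp hk)
          have : m + 1 - k = (m - k) + 1 := by omega
          rw [this, pow_succ]; ring
        rw [Finset.sum_congr rfl h4, Finset.sum_neg_distrib]
        ring
      have combine : ∑ s ∈ range (m+1), (-1)^s * (m.choose s : ℚ) * (c-s)^(m+1)
            - ∑ s ∈ range (m+1), (-1)^s * (m.choose s : ℚ) * (c-(s+1:ℕ))^(m+1)
          = ∑ s ∈ range (m+1), (-1)^s * (m.choose s : ℚ) * ((c-s)^(m+1) - ((c-s)-1)^(m+1)) := by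
        rw [← Finset.sum_sub_distrib]
        refine Finset.sum_congr rfl fun s _ => by push_cast; ring
      rw [combine]
      have step : ∀ s, (-1:ℚ)^s * (m.choose s : ℚ) * ((c-s)^(m+1) - ((c-s)-1)^(m+1))
          = ∑ k ∈ range (m+1), (-1)^(m-k) * ((m+1).choose k : ℚ) * ((-1)^s * (m.choose s : ℚ) * (c-s)^k) := by
        intro s
        rw [expand, Finset.mul_sum]
        refine Finset.sum_congr rfl fun k _ => by ring
      simp only [step]
      rw [Finset.sum_comm]
      have inner : ∀ k ∈ range (m+1),
          ∑ s ∈ range (m+1), (-1)^(m-k) * ((m+1).choose k : ℚ) * ((-1)^s * (m.choose s : ℚ) * (c-s)^k)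
          = (-1)^(m-k) * ((m+1).choose k : ℚ) * (if k = m then (m.factorial : ℚ) else 0) := by
        intro k hk
        rw [← Finset.mul_sum, ih k (Nat.lt_succ_iff.mp (Finset.mem_range.mp hk)) c]
      rw [Finset.sum_congr rfl inner, Finset.sum_eq_single m]
      · simp [Nat.factorial_succ, Nat.choose_succ_self_right]
      · intro k _ hk; simp [hk]
      · intro h; exact absurd (Finset.self_mem_range_succ m) h

theorem genus_zero_one_part_hurwitz (n : ℕ) (hn : 1 ≤ n) :
    (1 / ((n.factorial : ℚ) * n)) *
      ∑ s ∈ Finset.range n, (-1) ^ s * ((n - 1).choose s : ℚ) *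
        ((n.choose 2 : ℚ) - (n : ℚ) * (s : ℚ)) ^ (n - 1)
    = (n : ℚ) ^ ((n : ℤ) - 3) := by
  obtain ⟨m, rfl⟩ : ∃ m, n = m + 1 := ⟨n - 1, by omega⟩
  have hnq : ((m:ℚ) + 1) ≠ 0 := by positivity
  have hkey := hw_key m m le_rfl ((m:ℚ)/2)
  rw [if_pos rfl] at hkey
  have hsum : ∑ s ∈ Finset.range (m+1), (-1) ^ s * (((m+1) - 1).choose s : ℚ) *
        (((m+1).choose 2 : ℚ) - ((m+1:ℕ) : ℚ) * (s : ℚ)) ^ ((m+1) - 1)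
      = ((m:ℚ)+1)^m * (m.factorial : ℚ) := by
    rw [← hkey, Finset.mul_sum]
    refine Finset.sum_congr rfl fun s _ => ?_
    have hch : (((m+1).choose 2 : ℕ) : ℚ) = ((m:ℚ)+1) * ((m:ℚ)/2) := by
      rw [Nat.cast_choose_two]; push_cast; ring
    have h1 : (((m+1).choose 2 : ℚ) - ((m+1:ℕ) : ℚ) * (s : ℚ)) = ((m:ℚ)+1) * ((m:ℚ)/2 - s) := by
      rw [hch]; push_cast; ring
    simp only [Nat.add_sub_cancel, h1, mul_pow]
    ring
  rw [hsum]
  have he : ((m+1:ℕ) : ℤ) - 3 = (m : ℤ) - 2 := by push_cast; ring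
  rw [he, zpow_sub₀ (by push_cast; exact hnq), zpow_natCast]
  have h2 : ((m:ℚ)+1)^(2:ℤ) = ((m:ℚ)+1)^(2:ℕ) := by rw [show (2:ℤ) = ((2:ℕ):ℤ) from rfl, zpow_natCast]
  have hfac : (((m+1).factorial : ℕ) : ℚ) = ((m:ℚ)+1) * (m.factorial : ℚ) := by
    rw [Nat.factorial_succ]; push_cast; ring
  have hfacne : (m.factorial : ℚ) ≠ 0 := by positivity
  push_cast [hfac]
  rw [h2]
  field_simp
end

section
/- For every integer n ≥ 3 and every integer g ≥ 0, the rational number (1/(n!·n)) · ∑_{s=0}^{n−1} (−1)^s · C(n−1,s) · (C(n,2) − n·s)^{n−1+g} is an integer. -/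
open Finset

/-- `T m j = ∑_{s=0}^{m} (-1)^s C(m,s) s^j`, the alternating binomial moment sum. -/
private def T (m j : ℕ) : ℤ :=
  ∑ s ∈ range (m + 1), (-1 : ℤ) ^ s * (m.choose s : ℤ) * (s : ℤ) ^ j

private lemma T_rec (m j : ℕ) :
    T (m + 1) (j + 1) = -((m : ℤ) + 1) * ∑ i ∈ range (j + 1), (j.choose i : ℤ) * T m i := by
  rw [T, Finset.sum_range_succ']
  have h0 : (-1 : ℤ) ^ 0 * ((m+1).choose 0 : ℤ) * ((0 : ℕ) : ℤ) ^ (j + 1) = 0 := by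
    simp
  rw [h0, add_zero]
  have hterm : ∀ k ∈ range (m + 1),
      (-1 : ℤ) ^ (k+1) * ((m+1).choose (k+1) : ℤ) * ((k+1 : ℕ) : ℤ) ^ (j + 1)
        = -((m:ℤ)+1) * ((-1:ℤ)^k * (m.choose k : ℤ) *
            ∑ i ∈ range (j + 1), (k : ℤ) ^ i * (j.choose i : ℤ)) := by
    intro k _
    have hc : ((m+1).choose (k+1) : ℤ) * ((k : ℤ) + 1) = ((m : ℤ) + 1) * (m.choose k : ℤ) := by
      have h2 : ((m+1) * m.choose k : ℕ) = ((m+1).choose (k+1) * (k+1) : ℕ) :=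
        Nat.add_one_mul_choose_eq m k
      exact_mod_cast h2.symm
    have hexp : ((k : ℤ) + 1) ^ j = ∑ i ∈ range (j + 1), (k : ℤ) ^ i * (j.choose i : ℤ) := by
      rw [add_pow]
      simp
    push_cast
    linear_combination (-(-1:ℤ)^k * ((k:ℤ)+1)^j) * hc +
      (-(-1:ℤ)^k * ((m:ℤ)+1) * (m.choose k : ℤ)) * hexp
  rw [Finset.sum_congr rfl hterm, ← Finset.mul_sum]
  congr 1
  simp only [Finset.mul_sum]
  rw [Finset.sum_comm]
  refine Finset.sum_congr rfl fun i _ => ?_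
  rw [T, Finset.mul_sum]
  exact Finset.sum_congr rfl fun k _ => by ring

private lemma T_succ_zero (m : ℕ) : T (m + 1) 0 = 0 := by
  rw [T]
  have := Int.alternating_sum_range_choose_of_ne (Nat.succ_ne_zero m)
  rw [← this]
  exact Finset.sum_congr rfl fun s _ => by simp

private lemma T_zero : ∀ m, ∀ j, j < m → T m j = 0 := by
  intro m
  induction m with
  | zero => intro j hj; omega
  | succ m ih =>
    intro j hj
    cases j with
    | zero => exact T_succ_zero m
    | succ j =>
      rw [T_rec]
      have : ∑ i ∈ range (j + 1), (j.choose i : ℤ) * T m i = 0 := by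
        refine Finset.sum_eq_zero fun i hi => ?_
        rw [ih i (by simp at hi; omega), mul_zero]
      rw [this, mul_zero]

private lemma T_dvd : ∀ m, ∀ j, (m.factorial : ℤ) ∣ T m j := by
  intro m
  induction m with
  | zero => intro j; simp [Nat.factorial]
  | succ m ih =>
    intro j
    cases j with
    | zero => rw [T_succ_zero]; exact dvd_zero _
    | succ j =>
      rw [T_rec, Nat.factorial_succ]
      push_cast
      exact mul_dvd_mul ((dvd_neg).mpr dvd_rfl)
        (Finset.dvd_sum fun i _ => Dvd.dvd.mul_left (ih i) _)

theorem one_part_hurwitz_integral (n g : ℕ) (hn : 3 ≤ n) :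
    ∃ z : ℤ,
      (1 / ((n.factorial : ℚ) * n)) *
        ∑ s ∈ Finset.range n, (-1) ^ s * ((n - 1).choose s : ℚ) *
          ((n.choose 2 : ℚ) - (n : ℚ) * (s : ℚ)) ^ (n - 1 + g)
      = (z : ℚ) := by
  set N := n - 1 + g with hN
  set Sz : ℤ := ∑ s ∈ range n,
    (-1 : ℤ) ^ s * ((n - 1).choose s : ℤ) * ((n.choose 2 : ℤ) - (n : ℤ) * (s : ℤ)) ^ N with hSz
  have hm : n - 1 + 1 = n := by omega
  -- Step 1: the rational sum equals the cast of Sz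
  have hcast : (∑ s ∈ Finset.range n, (-1 : ℚ) ^ s * ((n - 1).choose s : ℚ) *
      ((n.choose 2 : ℚ) - (n : ℚ) * (s : ℚ)) ^ N) = (Sz : ℚ) := by
    rw [hSz]
    push_cast
    refine Finset.sum_congr rfl fun s _ => ?_
    ring
  -- Step 2: expand Sz as a combination of the T's
  have key : Sz = ∑ k ∈ range (N + 1),
      ((N.choose k : ℤ) * ((n.choose 2 : ℤ)) ^ (N - k) * (-(n : ℤ)) ^ k) * T (n - 1) k := by
    have expand : ∀ s ∈ range n, (-1 : ℤ) ^ s * ((n - 1).choose s : ℤ) *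
        ((n.choose 2 : ℤ) - (n : ℤ) * (s : ℤ)) ^ N
        = ∑ k ∈ range (N + 1), ((N.choose k : ℤ) * ((n.choose 2 : ℤ)) ^ (N - k) * (-(n : ℤ)) ^ k) *
            ((-1 : ℤ) ^ s * ((n - 1).choose s : ℤ) * (s : ℤ) ^ k) := by
      intro s _
      rw [show ((n.choose 2 : ℤ) - (n : ℤ) * (s : ℤ)) = (-(n : ℤ)) * (s : ℤ) + (n.choose 2 : ℤ) by ring, add_pow,
        Finset.mul_sum]
      refine Finset.sum_congr rfl fun k _ => ?_
      rw [mul_pow]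
      ring
    rw [hSz, Finset.sum_congr rfl expand, Finset.sum_comm]
    refine Finset.sum_congr rfl fun k _ => ?_
    rw [← Finset.mul_sum, T, hm]
  -- Step 3: n^(n-1) * (n-1)! divides Sz
  have hdvd : ((n : ℤ) ^ (n - 1) * ((n - 1).factorial : ℤ)) ∣ Sz := by
    rw [key]
    refine Finset.dvd_sum fun k _ => ?_
    rcases lt_or_ge k (n - 1) with hk | hk
    · rw [T_zero _ _ hk, mul_zero]
      exact dvd_zero _
    · refine mul_dvd_mul ?_ (T_dvd _ _)
      have h1 : ((n : ℤ)) ^ (n - 1) ∣ (-(n : ℤ)) ^ k := by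
        rw [show (-(n : ℤ)) = (-1) * (n : ℤ) by ring, mul_pow]
        exact Dvd.dvd.mul_left (pow_dvd_pow _ hk) _
      exact Dvd.dvd.mul_left h1 _
  -- Step 4: n! * n divides n^(n-1) * (n-1)!
  have hdvd2 : ((n.factorial : ℤ) * (n : ℤ)) ∣ ((n : ℤ) ^ (n - 1) * ((n - 1).factorial : ℤ)) := by
    have hnat : (n.factorial * n) ∣ (n ^ (n - 1) * (n - 1).factorial) := by
      refine ⟨n ^ (n - 3), ?_⟩
      have hf : n.factorial = n * (n - 1).factorial :=
        (Nat.mul_factorial_pred (by omega)).symm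
      rw [hf, show n - 1 = 2 + (n - 3) by omega, pow_add]
      ring
    exact_mod_cast hnat
  obtain ⟨z, hz⟩ := dvd_trans hdvd2 hdvd
  refine ⟨z, ?_⟩
  rw [hcast, hz]
  have hne : ((n.factorial : ℚ) * n) ≠ 0 := by
    have h1 : (n.factorial : ℚ) ≠ 0 := Nat.cast_ne_zero.mpr (Nat.factorial_ne_zero n)
    have h2 : (n : ℚ) ≠ 0 := Nat.cast_ne_zero.mpr (by omega)
    exact mul_ne_zero h1 h2
  push_cast
  field_simp
end

section
/- For every integer n ≥ 3 and integer g ≥ 0, (1/(n!·n)) · ∑_{s=0}^{n−1} (−1)^s · C(n−1,s) · (C(n,2) − n·s)^{n−1+g} equals n^{n−3} · ∑_{r=0}^{g} C(n−1+g, n−1+r) · C(n,2)^{g−r} · (−n)^r · S(n−1+r, n−1), where S denotes the Stirling number of the second kind. -/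
/-- Stirling numbers of the second kind. -/
def stirling2 : ℕ → ℕ → ℕ
  | 0, 0 => 1
  | 0, _ + 1 => 0
  | _ + 1, 0 => 0
  | p + 1, m + 1 => (m + 1) * stirling2 p (m + 1) + stirling2 p m

lemma stirling2_eq_zero : ∀ k m : ℕ, k < m → stirling2 k m = 0
  | 0, m + 1, _ => rfl
  | k + 1, m + 1, h => by
    have h1 : k < m + 1 := by omega
    have h2 : k < m := by omega
    simp [stirling2, stirling2_eq_zero k (m+1) h1, stirling2_eq_zero k m h2]

lemma stirl_sum (k m : ℕ) :
    ∑ s ∈ Finset.range (m + 1), (-1 : ℚ) ^ s * (m.choose s : ℚ) * (s : ℚ) ^ k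
      = (-1) ^ m * (m.factorial : ℚ) * (stirling2 k m : ℚ) := by
  induction k generalizing m with
  | zero =>
      cases m with
      | zero => simp [stirling2]
      | succ m' =>
          simp only [pow_zero, mul_one, stirling2, Nat.cast_zero, mul_zero]
          have := @Int.alternating_sum_range_choose (m' + 1)
          rw [if_neg (Nat.succ_ne_zero m')] at this
          have h2 : ((∑ i ∈ Finset.range (m' + 2), (-1 : ℤ) ^ i * ((m' + 1).choose i) : ℤ) : ℚ) = 0 := by
            rw [this]; norm_num
          push_cast at h2
          convert h2 using 2
  | succ k ih =>
      cases m with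
      | zero => simp [stirling2]
      | succ m' =>
          have key : ∀ s : ℕ, (-1 : ℚ) ^ s * ((m' + 1).choose s : ℚ) * (s : ℚ) ^ (k + 1)
              = ((m' : ℚ) + 1) * ((-1) ^ s * ((m' + 1).choose s : ℚ) * (s : ℚ) ^ k)
                - ((m' : ℚ) + 1) * ((-1) ^ s * (m'.choose s : ℚ) * (s : ℚ) ^ k) := by
            intro s
            have hcast : (s : ℚ) * ((m' + 1).choose s : ℚ)
                = ((m' : ℚ) + 1) * (((m' + 1).choose s : ℚ) - (m'.choose s : ℚ)) := by
              cases s with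
              | zero => simp
              | succ t =>
                  have h := Nat.add_one_mul_choose_eq m' t
                  have hp : (m' + 1).choose (t + 1) = m'.choose t + m'.choose (t + 1) :=
                    Nat.choose_succ_succ m' t
                  have : ((m' + 1) * m'.choose t : ℚ) = ((m' + 1).choose (t + 1) : ℚ) * (t + 1) := by
                    exact_mod_cast congrArg (Nat.cast : ℕ → ℚ) h
                  have hp' : ((m' + 1).choose (t + 1) : ℚ) = (m'.choose t : ℚ) + (m'.choose (t + 1) : ℚ) := by
                    exact_mod_cast congrArg (Nat.cast : ℕ → ℚ) hp
                  push_cast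
                  nlinarith [this, hp']
            calc (-1 : ℚ) ^ s * ((m' + 1).choose s : ℚ) * (s : ℚ) ^ (k + 1)
                = (-1) ^ s * ((s : ℚ) * ((m' + 1).choose s : ℚ)) * (s : ℚ) ^ k := by ring
              _ = _ := by rw [hcast]; ring
          rw [Finset.sum_congr rfl fun s _ => key s, Finset.sum_sub_distrib,
            ← Finset.mul_sum, ← Finset.mul_sum]
          have hlast : ∑ s ∈ Finset.range (m' + 2), (-1 : ℚ) ^ s * (m'.choose s : ℚ) * (s : ℚ) ^ k
              = ∑ s ∈ Finset.range (m' + 1), (-1 : ℚ) ^ s * (m'.choose s : ℚ) * (s : ℚ) ^ k := by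
            rw [Finset.sum_range_succ, Nat.choose_succ_self]
            simp
          rw [ih (m' + 1), hlast, ih m']
          show _ = (-1 : ℚ) ^ (m' + 1) * ((m' + 1).factorial : ℚ) * ((stirling2 (k+1) (m'+1) : ℕ) : ℚ)
          rw [show stirling2 (k+1) (m'+1) = (m' + 1) * stirling2 k (m' + 1) + stirling2 k m' from rfl]
          push_cast [Nat.factorial_succ]
          ring

theorem one_part_hurwitz_formula (n g : ℕ) (hn : 3 ≤ n) :
    (1 / ((n.factorial : ℚ) * n)) *
      ∑ s ∈ Finset.range n, (-1) ^ s * ((n - 1).choose s : ℚ) *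
        ((n.choose 2 : ℚ) - (n : ℚ) * (s : ℚ)) ^ (n - 1 + g)
    = (n : ℚ) ^ (n - 3) *
      ∑ r ∈ Finset.range (g + 1),
        ((n - 1 + g).choose (n - 1 + r) : ℚ) * (n.choose 2 : ℚ) ^ (g - r) *
          (-(n : ℚ)) ^ r * (stirling2 (n - 1 + r) (n - 1) : ℚ) := by
  obtain ⟨m, rfl⟩ : ∃ m, n = m + 3 := ⟨n - 3, by omega⟩
  set n := m + 3 with hndef
  set A : ℚ := (n.choose 2 : ℚ) with hA
  have h1 : n - 1 = m + 2 := by omega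
  have h3 : n - 3 = m := by omega
  set K := m + 2 + g with hK
  have hexp : ∀ s : ℕ, (A - (n : ℚ) * (s : ℚ)) ^ K
      = ∑ k ∈ Finset.range (K + 1), (-(n:ℚ))^k * (s:ℚ)^k * A^(K - k) * (K.choose k : ℚ) := by
    intro s
    rw [show A - (n : ℚ) * s = (-((n:ℚ) * s)) + A by ring, add_pow]
    refine Finset.sum_congr rfl fun k _ => ?_
    rw [show (-((n:ℚ) * s)) = (-(n:ℚ)) * s by ring, mul_pow]
  rw [h1, h3]
  have hswap :
      ∑ s ∈ Finset.range n, (-1 : ℚ) ^ s * ((m + 2).choose s : ℚ) *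
          (A - (n : ℚ) * (s : ℚ)) ^ K
        = ∑ k ∈ Finset.range (K + 1),
            (-(n:ℚ))^k * A^(K - k) * (K.choose k : ℚ) *
              ((-1)^(m+2) * ((m+2).factorial : ℚ) * (stirling2 k (m+2) : ℚ)) := by
    calc ∑ s ∈ Finset.range n, (-1 : ℚ) ^ s * ((m + 2).choose s : ℚ) *
            (A - (n : ℚ) * (s : ℚ)) ^ K
        = ∑ s ∈ Finset.range (m + 2 + 1), ∑ k ∈ Finset.range (K + 1),
            (-(n:ℚ))^k * A^(K - k) * (K.choose k : ℚ) *
              ((-1)^s * ((m+2).choose s : ℚ) * (s:ℚ)^k) := by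
          refine Finset.sum_congr rfl fun s _ => ?_
          rw [hexp s, Finset.mul_sum]
          exact Finset.sum_congr rfl fun k _ => by ring
      _ = ∑ k ∈ Finset.range (K + 1), ∑ s ∈ Finset.range (m + 2 + 1),
            (-(n:ℚ))^k * A^(K - k) * (K.choose k : ℚ) *
              ((-1)^s * ((m+2).choose s : ℚ) * (s:ℚ)^k) := Finset.sum_comm
      _ = _ := by
          refine Finset.sum_congr rfl fun k _ => ?_
          rw [← Finset.mul_sum, stirl_sum k (m + 2)]
  rw [hswap]
  have hsplit : ∑ k ∈ Finset.range (K + 1),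
        (-(n:ℚ))^k * A^(K - k) * (K.choose k : ℚ) *
          ((-1)^(m+2) * ((m+2).factorial : ℚ) * (stirling2 k (m+2) : ℚ))
      = ∑ r ∈ Finset.range (g + 1),
          (-(n:ℚ))^(m+2+r) * A^(g - r) * (K.choose (m+2+r) : ℚ) *
            ((-1)^(m+2) * ((m+2).factorial : ℚ) * (stirling2 (m+2+r) (m+2) : ℚ)) := by
    rw [show K + 1 = (m + 2) + (g + 1) by omega, Finset.sum_range_add]
    have hz : ∑ k ∈ Finset.range (m + 2),
        (-(n:ℚ))^k * A^(K - k) * (K.choose k : ℚ) *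
          ((-1)^(m+2) * ((m+2).factorial : ℚ) * (stirling2 k (m+2) : ℚ)) = 0 := by
      refine Finset.sum_eq_zero fun k hk => ?_
      rw [stirling2_eq_zero k (m+2) (Finset.mem_range.mp hk)]
      simp
    rw [hz, zero_add]
    refine Finset.sum_congr rfl fun r hr => ?_
    have : K - (m + 2 + r) = g - r := by omega
    rw [this]
  rw [hsplit, Finset.mul_sum, Finset.mul_sum]
  refine Finset.sum_congr rfl fun r hr => ?_
  have hfac : (n.factorial : ℚ) = ((m+2).factorial : ℚ) * n := by
    rw [show n = m + 3 from rfl, Nat.factorial_succ]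
    push_cast; ring
  have hne : ((m+2).factorial : ℚ) ≠ 0 := by positivity
  have hn0 : (n : ℚ) ≠ 0 := by positivity
  have hpow : (-(n:ℚ))^(m+2+r) * (-1 : ℚ)^(m+2) = (n:ℚ)^(m+2) * (-(n:ℚ))^r := by
    rw [pow_add, mul_comm ((-(n:ℚ))^(m+2)) _, mul_assoc, ← mul_pow]
    norm_num
    exact mul_comm _ _
  field_simp [hfac]
  linear_combination (A^(g-r) * ((K.choose (m+2+r) : ℕ) : ℚ) * ((m+2).factorial : ℚ) *
    ((stirling2 (m+2+r) (m+2) : ℕ) : ℚ)) * hpow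
    - ((n:ℚ) * (n:ℚ)^m * (n:ℚ)^r * A^(g-r) * ((K.choose (m+2+r) : ℕ) : ℚ) *
      ((stirling2 (m+2+r) (m+2) : ℕ) : ℚ) * (-1 : ℚ)^r) * hfac
end

section
/- Define the simple Hurwitz numbers h_{g,k} for g ≥ 0 and finite multisets k of positive integers recursively by h_{0,(1)} = 1 and the cut-and-join recursion: r(g,k)·H_g(k) = ∑_{i<j} (k_i+k_j) H_g(k with k_i,k_j replaced by k_i+k_j) + (1/2) ∑_i ∑_{α+β=k_i} αβ [ H_{g−1}(k with k_i replaced by α,β) + ∑_{g_1+g_2=g} ∑_{m⊔n = k∖{k_i}} H_{g_1}(m∪{α}) H_{g_2}(n∪{β}) ], where H_g(k) = (#Aut(k)/r(g,k)!)·h_{g,k}, r(g,k) = 2g−2+ℓ(k)+|k|, and #Aut(k)=∏_i m_i(k)!. Then for every g ≥ 1, h_{g,(1)} = 0. -/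
open Finset

/-- `#Aut(k) = ∏_i m_i(k)!`. -/
def cjAut (k : Multiset ℕ) : ℕ :=
  k.toFinset.prod fun i => (k.count i).factorial

/-- `r(g, k) = 2g - 2 + ℓ(k) + |k|` (a genuine natural number whenever `k` is a
nonempty multiset of positive integers). -/
def cjR (g : ℕ) (k : Multiset ℕ) : ℕ :=
  2 * g + Multiset.card k + k.sum - 2

/-- `H_g(k) = (#Aut(k)/r(g,k)!) h_{g,k}`. -/
noncomputable def cjH (h : ℕ → Multiset ℕ → ℚ) (g : ℕ) (k : Multiset ℕ) : ℚ :=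
  (cjAut k : ℚ) / ((cjR g k).factorial : ℚ) * h g k

/-- The cut-and-join recursion for `H_g(k)`, for every genus `g ≥ 0` and every
nonempty multiset `k` of positive integers:
`r(g,k) H_g(k) = ∑_{i<j} (k_i+k_j) H_g(cut) + (1/2) ∑_i ∑_{α+β=k_i} αβ [H_{g-1}(join)
  + ∑_{g₁+g₂=g} ∑_{m ⊔ n} H_{g₁}(m ∪ {α}) H_{g₂}(n ∪ {β})]`.
The cut sum over unordered pairs `i < j` is written as one half of the sum over
ordered pairs of distinct indices, and `m ⊔ n` runs over ordered decompositions of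
`k ∖ {k_i}` (as sub-multisets counted with multiplicity, i.e. over subsets of the
index set, via `Multiset.powerset`). -/
def CutAndJoinRec (h : ℕ → Multiset ℕ → ℚ) : Prop :=
  ∀ (g : ℕ) (k : Multiset ℕ), k ≠ 0 → 0 ∉ k →
    (cjR g k : ℚ) * cjH h g k =
      (1 / 2) * ((k.bind fun a : ℕ => (k.erase a).map fun b : ℕ =>
          ((a + b : ℕ) : ℚ) * cjH h g ((a + b) ::ₘ ((k.erase a).erase b))).sum)
      + (1 / 2) * ((k.map fun a : ℕ =>
          ∑ α ∈ Finset.Ioo 0 a,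
            (α : ℚ) * ((a - α : ℕ) : ℚ) *
              ((if 1 ≤ g then cjH h (g - 1) (α ::ₘ (a - α) ::ₘ k.erase a) else 0)
                + ∑ g₁ ∈ Finset.range (g + 1),
                    ((k.erase a).powerset.map fun m =>
                      cjH h g₁ (α ::ₘ m) *
                        cjH h (g - g₁) ((a - α) ::ₘ (k.erase a - m))).sum)).sum)

/-- For the simple Hurwitz numbers, defined by the cut-and-join recursion with
initial value `h_{0,(1)} = 1`: `h_{g,(1)} = 0` for all `g ≥ 1`. -/
theorem hurwitz_one_part_one (h : ℕ → Multiset ℕ → ℚ)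
    (hrec : CutAndJoinRec h) (hinit : h 0 {1} = 1) :
    ∀ g : ℕ, 1 ≤ g → h g {1} = 0 := by
  intro g hg
  have H := hrec g {1} (by simp) (by simp)
  have e : Finset.Ioo 0 1 = (∅ : Finset ℕ) := by decide
  simp [cjH, cjR, cjAut, Multiset.erase_singleton, e] at H
  rcases H with H | H
  · omega
  · rcases H with H | H
    · exact absurd H (by positivity)
    · exact H
end

section
/- With the Hurwitz numbers h_{g,μ} defined by the cut-and-join recursion with initial value h_{0,(1)} = 1, for every g ≥ 0 and n ≥ 2 one has h_{g,(2,1^{n−2})} = h_{g,(1^n)}. -/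
open Finset

lemma erase_rep (m : ℕ) : (Multiset.replicate (m+1) (1:ℕ)).erase 1 = Multiset.replicate m 1 := by
  rw [Multiset.replicate_succ, Multiset.erase_cons_head]

lemma aut_rep (n : ℕ) : cjAut (Multiset.replicate n 1) = n.factorial := by
  rcases n with _ | n
  · simp [cjAut]
  · rw [cjAut, Multiset.toFinset_replicate]
    simp only [Nat.succ_ne_zero, if_false]
    simp [Multiset.count_replicate]

lemma aut_two (m : ℕ) : cjAut (2 ::ₘ Multiset.replicate m 1) = m.factorial := by
  rcases m with _ | m
  · simp [cjAut]
  · rw [cjAut, Multiset.toFinset_cons, Multiset.toFinset_replicate]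
    simp only [Nat.succ_ne_zero, if_false]
    rw [Finset.prod_insert (by simp)]
    simp [Multiset.count_replicate, Multiset.count_cons]

lemma r_rep (g m : ℕ) : cjR g (Multiset.replicate (m+2) 1) = 2*g+2*m+2 := by
  simp [cjR, Multiset.sum_replicate]; omega

lemma r_two (g m : ℕ) : cjR g (2 ::ₘ Multiset.replicate m 1) = 2*g+2*m+1 := by
  simp [cjR, Multiset.sum_replicate]; omega

/-- For the simple Hurwitz numbers, defined by the cut-and-join recursion with
initial value `h_{0,(1)} = 1`: `h_{g,(2,1^{n-2})} = h_{g,(1^n)}` for all `g ≥ 0`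
and `n ≥ 2`. -/
theorem hurwitz_two_one (h : ℕ → Multiset ℕ → ℚ)
    (hrec : CutAndJoinRec h) (hinit : h 0 {1} = 1) :
    ∀ (g n : ℕ), 2 ≤ n →
      h g (2 ::ₘ Multiset.replicate (n - 2) 1) = h g (Multiset.replicate n 1) := by
  intro g n hn
  obtain ⟨m, rfl⟩ : ∃ m, n = m + 2 := ⟨n - 2, by omega⟩
  have hm2 : m + 2 - 2 = m := by omega
  rw [hm2]
  have key := hrec g (Multiset.replicate (m+2) 1) (by simp) (by simp [Multiset.mem_replicate])
  rw [Multiset.sum_bind] at key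
  simp only [Multiset.map_replicate, erase_rep, Multiset.sum_replicate,
    show Finset.Ioo 0 1 = (∅ : Finset ℕ) from by decide, Finset.sum_empty,
    smul_zero, mul_zero, add_zero, show (1+1 : ℕ) = 2 from rfl] at key
  rw [cjH, cjH, aut_rep, aut_two, r_rep, r_two] at key
  set q1 := h g (Multiset.replicate (m+2) 1)
  set q2 := h g (2 ::ₘ Multiset.replicate m 1)
  have f1 : ((2*g+2*m+2).factorial : ℚ) = (2*(g:ℚ)+2*m+2) * ((2*g+2*m+1).factorial : ℚ) := by
    rw [show 2*g+2*m+2 = (2*g+2*m+1)+1 from rfl, Nat.factorial_succ]; push_cast; ring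
  have f2 : ((m+2).factorial : ℚ) = ((m:ℚ)+2) * ((m:ℚ)+1) * (m.factorial : ℚ) := by
    rw [show m+2 = (m+1)+1 from rfl, Nat.factorial_succ, Nat.factorial_succ]; push_cast; ring
  have hD : ((2*g+2*m+1).factorial : ℚ) ≠ 0 := by exact_mod_cast (Nat.factorial_pos _).ne'
  have hF : ((m.factorial : ℚ)) ≠ 0 := by exact_mod_cast (Nat.factorial_pos _).ne'
  have hA : (2*(g:ℚ)+2*m+2) ≠ 0 := by positivity
  rw [smul_smul, nsmul_eq_mul] at key
  push_cast [f1, f2] at key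
  field_simp at key
  have hC : (2*(g:ℚ)+2*m+2) * (((m:ℚ)+2) * ((m:ℚ)+1) * (m.factorial:ℚ)) * (2 * ((2*g+2*m+1).factorial:ℚ)) ≠ 0 := by
    have h1 : (0:ℚ) < m.factorial := by exact_mod_cast Nat.factorial_pos m
    have h2 : (0:ℚ) < (2*g+2*m+1).factorial := by exact_mod_cast Nat.factorial_pos _
    positivity
  apply mul_left_cancel₀ hC
  linear_combination (-((2*(g:ℚ)+2*m+2) * (((m:ℚ)+2) * ((m:ℚ)+1) * (m.factorial:ℚ)) * (2 * ((2*g+2*m+1).factorial:ℚ)))) * key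
end

section
/- Every Hurwitz number h_{g,μ} (defined by the cut-and-join recursion) lies in the semiring ℤ_{≥0}[h_{0,(n)} : n ≥ 1]; i.e., h_{g,μ} is a polynomial with non-negative integer coefficients in the one-part genus-zero Hurwitz numbers h_{0,(n)}. -/
open Finset

lemma cjAut_zero : cjAut 0 = 1 := rfl

lemma cjAut_pos (k : Multiset ℕ) : 0 < cjAut k :=
  Finset.prod_pos fun _ _ => Nat.factorial_pos _

lemma cjAut_cons (x : ℕ) (s : Multiset ℕ) :
    cjAut (x ::ₘ s) = (s.count x + 1) * cjAut s := by
  classical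
  unfold cjAut
  rw [Multiset.toFinset_cons]
  by_cases hx : x ∈ s.toFinset
  · rw [Finset.insert_eq_self.2 hx]
    rw [Finset.prod_eq_mul_prod_sdiff_singleton_of_mem hx
        (fun i => (Multiset.count i (x ::ₘ s)).factorial),
      Finset.prod_eq_mul_prod_sdiff_singleton_of_mem hx (fun i => (Multiset.count i s).factorial)]
    have h1 : Multiset.count x (x ::ₘ s) = Multiset.count x s + 1 := by
      simp [Multiset.count_cons]
    have h2 : ∀ i ∈ s.toFinset \ {x}, (Multiset.count i (x ::ₘ s)).factorial
        = (Multiset.count i s).factorial := by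
      intro i hi
      rcases Finset.mem_sdiff.1 hi with ⟨-, hix⟩
      simp only [Finset.mem_singleton] at hix
      rw [Multiset.count_cons_of_ne hix]
    rw [Finset.prod_congr rfl h2, h1, Nat.factorial_succ]
    ring
  · have hxs : Multiset.count x s = 0 := by
      simpa using fun h => hx (Multiset.mem_toFinset.2 h)
    rw [Finset.prod_insert hx]
    have h1 : Multiset.count x (x ::ₘ s) = 1 := by
      simp [Multiset.count_cons, hxs]
    have h2 : ∀ i ∈ s.toFinset, (Multiset.count i (x ::ₘ s)).factorial
        = (Multiset.count i s).factorial := by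
      intro i hi
      have hix : i ≠ x := fun e => hx (e ▸ hi)
      rw [Multiset.count_cons_of_ne hix]
    rw [Finset.prod_congr rfl h2, h1, hxs]
    simp

lemma cjAut_erase {a : ℕ} {k : Multiset ℕ} (ha : a ∈ k) :
    k.count a * cjAut (k.erase a) = cjAut k := by
  conv_rhs => rw [← Multiset.cons_erase ha]
  rw [cjAut_cons, Multiset.count_erase_self]
  have : 1 ≤ k.count a := Multiset.one_le_count_iff_mem.2 ha
  congr 1
  omega

lemma cjAut_count_powerset :
    ∀ (e m : Multiset ℕ), m ≤ e →
      e.powerset.count m * cjAut m * cjAut (e - m) = cjAut e := by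
  classical
  intro e
  induction e using Multiset.induction_on with
  | empty =>
      intro m hm
      rw [Multiset.le_zero.1 hm]
      simp [Multiset.powerset_zero, cjAut]
  | cons x t IH =>
      intro m hm
      have hinj : Function.Injective (fun s : Multiset ℕ => x ::ₘ s) :=
        fun s t h => (Multiset.cons_inj_right x).1 h
      rw [Multiset.powerset_cons, Multiset.count_add]
      by_cases hx : x ∈ m
      · set m' := m.erase x with hm'def
        have hmm : x ::ₘ m' = m := Multiset.cons_erase hx
        have hm't : m' ≤ t := by
          have := Multiset.erase_le_erase x hm
          simpa [Multiset.erase_cons_head] using this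
        have hcnt2 : Multiset.count m (Multiset.map (fun s => x ::ₘ s) t.powerset)
            = t.powerset.count m' := by
          rw [← hmm]
          exact Multiset.count_map_eq_count' _ _ hinj m'
        have hsub : (x ::ₘ t) - m = t - m' := by
          rw [← hmm, Multiset.sub_cons, Multiset.erase_cons_head]
        have hIH2 := IH m' hm't
        have hMx : m.count x = m'.count x + 1 := by
          rw [← hmm]; simp [Multiset.count_cons]
        have hAutm : cjAut m = (m'.count x + 1) * cjAut m' := by
          rw [← hmm, cjAut_cons]
        by_cases hmt : m ≤ t
        · have hIH1 := IH m hmt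
          have hcxm : m.count x ≤ t.count x := Multiset.count_le_of_le x hmt
          have hsub2 : t - m' = x ::ₘ (t - m) := by
            ext b
            by_cases hbx : b = x
            · subst hbx
              simp only [Multiset.count_sub, Multiset.count_cons_self]
              rw [← hmm]
              simp only [Multiset.count_erase_self, ← hmm, Multiset.count_cons_self] at *
              omega
            · simp only [Multiset.count_sub, Multiset.count_cons_of_ne hbx]
              rw [hm'def, Multiset.count_erase_of_ne hbx]
          have hAut2 : cjAut (t - m') = ((t - m).count x + 1) * cjAut (t - m) := by
            rw [hsub2, cjAut_cons]
          have hc : (t-m).count x = t.count x - m.count x := Multiset.count_sub x t m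
          rw [hsub, cjAut_cons]
          rw [hcnt2, hAut2]
          have hM1 : 1 ≤ m.count x := Multiset.one_le_count_iff_mem.2 hx
          have e2 : t.powerset.count m' * cjAut m * ((Multiset.count x (t - m) + 1) * cjAut (t - m))
              = cjAut t * m.count x := by
            rw [hAutm, ← hAut2, hMx]
            calc t.powerset.count m' * ((m'.count x + 1) * cjAut m') * cjAut (t - m')
                = (m'.count x + 1) * (t.powerset.count m' * cjAut m' * cjAut (t - m')) := by ring
              _ = cjAut t * (m'.count x + 1) := by rw [hIH2]; ring
          have hkey : Multiset.count x (t - m) + 1 + m.count x = t.count x + 1 := by omega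
          calc (t.powerset.count m + t.powerset.count m') * cjAut m *
                ((Multiset.count x (t - m) + 1) * cjAut (t - m))
              = t.powerset.count m * cjAut m * cjAut (t - m) * (Multiset.count x (t - m) + 1)
                + t.powerset.count m' * cjAut m * ((Multiset.count x (t - m) + 1) * cjAut (t - m)) := by
                ring
            _ = cjAut t * (Multiset.count x (t - m) + 1) + cjAut t * m.count x := by rw [hIH1, e2]
            _ = cjAut t * (Multiset.count x (t - m) + 1 + m.count x) := by ring
            _ = (t.count x + 1) * cjAut t := by rw [hkey]; ring
        · have hc1 : t.powerset.count m = 0 :=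
            Multiset.count_eq_zero.2 (fun hmem => hmt (Multiset.mem_powerset.1 hmem))
          have hcxm : m.count x = t.count x + 1 := by
            have hle : ∀ b, m.count b ≤ (x ::ₘ t).count b :=
              fun b => Multiset.count_le_of_le b hm
            have h1 := hle x
            simp only [Multiset.count_cons_self] at h1
            by_contra hne
            apply hmt
            rw [Multiset.le_iff_count]
            intro b
            by_cases hbx : b = x
            · subst hbx; omega
            · have := hle b
              rwa [Multiset.count_cons_of_ne hbx] at this
          rw [hsub, cjAut_cons, hcnt2, hc1]
          have hIH2 := IH m' hm't
          have hAutm' : cjAut m = (t.count x + 1) * cjAut m' := by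
            rw [hAutm]
            congr 1
            omega
          calc (0 + t.powerset.count m') * cjAut m * cjAut (t - m')
              = (t.count x + 1) * (t.powerset.count m' * cjAut m' * cjAut (t - m')) := by
                rw [hAutm']; ring
            _ = (t.count x + 1) * cjAut t := by rw [hIH2]
      · have hcnt2 : Multiset.count m (Multiset.map (fun s => x ::ₘ s) t.powerset) = 0 := by
          apply Multiset.count_eq_zero.2
          intro hmem
          rcases Multiset.mem_map.1 hmem with ⟨s, -, hs⟩
          exact hx (hs ▸ Multiset.mem_cons_self x s)
        have hmt : m ≤ t := by
          rw [Multiset.le_iff_count]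
          intro b
          have := Multiset.count_le_of_le b hm
          by_cases hbx : b = x
          · subst hbx; simp [Multiset.count_eq_zero.2 hx]
          · rwa [Multiset.count_cons_of_ne hbx] at this
        have hsub : (x ::ₘ t) - m = x ::ₘ (t - m) := by
          ext b
          by_cases hbx : b = x
          · subst hbx
            simp [Multiset.count_sub, Multiset.count_eq_zero.2 hx]
          · simp [Multiset.count_sub, Multiset.count_cons_of_ne hbx]
        rw [hsub, cjAut_cons, hcnt2, cjAut_cons]
        have hIH1 := IH m hmt
        have hcx : (t - m).count x = t.count x := by
          rw [Multiset.count_sub, Multiset.count_eq_zero.2 hx]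
          omega
        rw [hcx]
        calc (t.powerset.count m + 0) * cjAut m * ((t.count x + 1) * cjAut (t - m))
            = (t.count x + 1) * (t.powerset.count m * cjAut m * cjAut (t - m)) := by ring
          _ = (t.count x + 1) * cjAut t := by rw [hIH1]

lemma cjHFin (S : Subsemiring ℚ) {ι : Type} (fs : Finset ι) (F : ι → ℚ) (C : ℚ)
    (hF : ∀ i ∈ fs, ∃ y ∈ S, F i = C * y) :
    ∃ z ∈ S, ∑ i ∈ fs, F i = C * z := by
  classical
  choose Y hY1 hY2 using fun i (hi : i ∈ fs) => hF i hi
  refine ⟨∑ i ∈ fs.attach, Y i.1 i.2, Subsemiring.sum_mem _ (fun i _ => hY1 i.1 i.2), ?_⟩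
  rw [Finset.mul_sum, ← Finset.sum_attach fs F]
  exact Finset.sum_congr rfl fun i _ => hY2 i.1 i.2

lemma cjG1 (S : Subsemiring ℚ) (k : Multiset ℕ) (F : ℕ → ℚ)
    (hF : ∀ a ∈ k, ∃ y ∈ S, F a = (cjAut (k.erase a) : ℚ) * y) :
    ∃ z ∈ S, (k.map F).sum = (cjAut k : ℚ) * z := by
  classical
  rw [Finset.sum_multiset_map_count]
  apply cjHFin
  intro a ha
  have hak : a ∈ k := Multiset.mem_toFinset.1 ha
  obtain ⟨y, hyS, hy⟩ := hF a hak
  refine ⟨y, hyS, ?_⟩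
  rw [hy, nsmul_eq_mul, ← mul_assoc]
  congr 1
  rw [← Nat.cast_mul, cjAut_erase hak]

lemma cjG2 (S : Subsemiring ℚ) (e : Multiset ℕ) (F : Multiset ℕ → ℚ)
    (hF : ∀ m ≤ e, ∃ y ∈ S, F m = (cjAut m : ℚ) * (cjAut (e - m) : ℚ) * y) :
    ∃ z ∈ S, (e.powerset.map F).sum = (cjAut e : ℚ) * z := by
  classical
  rw [Finset.sum_multiset_map_count]
  apply cjHFin
  intro m hm
  have hme : m ≤ e := Multiset.mem_powerset.1 (Multiset.mem_toFinset.1 hm)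
  obtain ⟨y, hyS, hy⟩ := hF m hme
  refine ⟨y, hyS, ?_⟩
  rw [hy, nsmul_eq_mul, ← mul_assoc, ← mul_assoc]
  congr 1
  rw [← Nat.cast_mul, ← Nat.cast_mul, cjAut_count_powerset e m hme]

/-- Every Hurwitz number `h_{g,μ}` (defined by the cut-and-join recursion with
initial value `h_{0,(1)} = 1`) is a polynomial with non-negative integer
coefficients in the one-part genus-zero Hurwitz numbers `h_{0,(n)}`, i.e. lies in
the subsemiring of `ℚ` generated by the values `h_{0,(n)}`, `n ≥ 1`. -/
theorem hurwitz_polynomial (h : ℕ → Multiset ℕ → ℚ)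
    (hrec : CutAndJoinRec h) (hinit : h 0 {1} = 1) :
    ∀ (g : ℕ) (k : Multiset ℕ), k ≠ 0 → 0 ∉ k →
      h g k ∈ Subsemiring.closure {x : ℚ | ∃ n : ℕ, 1 ≤ n ∧ x = h 0 {n}} := by
  classical
  set S : Subsemiring ℚ := Subsemiring.closure {x : ℚ | ∃ n : ℕ, 1 ≤ n ∧ x = h 0 {n}} with hS
  have hgen : ∀ n : ℕ, 1 ≤ n → h 0 {n} ∈ S := fun n hn =>
    Subsemiring.subset_closure ⟨n, hn, rfl⟩
  -- `h 0 {2} = 1/2`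
  have h2 : h 0 {2} = 1/2 := by
    have hs := hrec 0 {2} (by simp) (by simp)
    have hIoo : Finset.Ioo 0 2 = {1} := rfl
    have h21 : cjR 0 {2} = 1 := rfl
    have h10 : cjR 0 {1} = 0 := rfl
    have ha2 : cjAut {2} = 1 := rfl
    have ha1 : cjAut {1} = 1 := rfl
    have hc1 : cjH h 0 {1} = 1 := by
      rw [cjH, h10, ha1, hinit]
      norm_num
    have hc2 : cjH h 0 {2} = h 0 {2} := by
      rw [cjH, h21, ha2]
      norm_num
    simp only [show ({2} : Multiset ℕ) = 2 ::ₘ 0 from rfl, Multiset.cons_bind, Multiset.zero_bind,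
      Multiset.map_cons, Multiset.map_zero, Multiset.sum_cons, Multiset.sum_zero,
      Multiset.erase_cons_head, hIoo, Finset.sum_singleton, Multiset.powerset_zero,
      Finset.range_one, Multiset.map_zero, add_zero] at hs
    rw [show cjR 0 (2 ::ₘ 0) = 1 from rfl,
      show cjH h 0 (2 ::ₘ 0) = cjH h 0 {2} from rfl] at hs
    simp only [Finset.sum_singleton, Multiset.map_singleton, Multiset.sum_singleton,
      show (2-1:ℕ) = 1 from rfl, show ((0:Multiset ℕ) - 0) = 0 from rfl,
      show ((1:ℕ) ::ₘ 0 : Multiset ℕ) = {1} from rfl, hc1, hc2] at hs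
    norm_num at hs
    rw [hc1] at hs
    norm_num at hs
    exact hs
  have hhalf : (1/2 : ℚ) ∈ S := h2 ▸ hgen 2 one_le_two
  have hcs : ∀ s : Multiset ℕ, 0 ∉ s → Multiset.card s ≤ s.sum := by
    intro s
    induction s using Multiset.induction_on with
    | empty => simp
    | cons x t IHt =>
        intro hs
        simp only [Multiset.mem_cons, not_or] at hs
        have hx : 1 ≤ x := Nat.one_le_iff_ne_zero.2 (fun e => hs.1 e.symm)
        have := IHt hs.2
        simp only [Multiset.card_cons, Multiset.sum_cons]
        omega
  suffices H : ∀ N g k, k ≠ 0 → 0 ∉ k → cjR g k ≤ N → h g k ∈ S by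
    exact fun g k h1 h2' => H (cjR g k) g k h1 h2' le_rfl
  intro N
  induction N with
  | zero =>
      intro g k hk hk0 hle
      have hcard : 1 ≤ Multiset.card k := Multiset.card_pos.2 hk
      have hsum := hcs k hk0
      rw [cjR] at hle
      have hcard1 : Multiset.card k = 1 := by omega
      obtain ⟨a, rfl⟩ := Multiset.card_eq_one.1 hcard1
      have hsa : ({a} : Multiset ℕ).sum = a := by simp
      rw [hcard1, hsa] at hle
      obtain ⟨rfl, rfl⟩ : g = 0 ∧ a = 1 := by
        rw [hcard1, hsa] at hsum
        constructor <;> omega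
      exact hgen 1 le_rfl
  | succ N IH =>
      intro g k hk hk0 hle
      by_cases hcase : cjR g k ≤ N
      · exact IH g k hk hk0 hcase
      have hreq : cjR g k = N + 1 := by omega
      have hpos : ∀ a ∈ k, 1 ≤ a := fun a ha =>
        Nat.one_le_iff_ne_zero.2 (by rintro rfl; exact hk0 ha)
      have hE := hrec g k hk hk0
      have hNfne : ((N.factorial : ℚ)) ≠ 0 := Nat.cast_ne_zero.2 (Nat.factorial_pos N).ne'
      set C := ((k.bind fun a : ℕ => (k.erase a).map fun b : ℕ =>
          ((a + b : ℕ) : ℚ) * cjH h g ((a + b) ::ₘ ((k.erase a).erase b))).sum) with hCdef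
      set J := ((k.map fun a : ℕ =>
          ∑ α ∈ Finset.Ioo 0 a,
            (α : ℚ) * ((a - α : ℕ) : ℚ) *
              ((if 1 ≤ g then cjH h (g - 1) (α ::ₘ (a - α) ::ₘ k.erase a) else 0)
                + ∑ g₁ ∈ Finset.range (g + 1),
                    ((k.erase a).powerset.map fun m =>
                      cjH h g₁ (α ::ₘ m) *
                        cjH h (g - g₁) ((a - α) ::ₘ (k.erase a - m))).sum)).sum) with hJdef
      -- Claim C
      obtain ⟨z, hzS, hz⟩ : ∃ z ∈ S, (N.factorial : ℚ) * C = (cjAut k : ℚ) * z := by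
        rw [hCdef, Multiset.sum_bind, ← Multiset.sum_map_mul_left]
        apply cjG1
        intro a ha
        beta_reduce
        rw [← Multiset.sum_map_mul_left]
        apply cjG1
        intro b hb
        beta_reduce
        have hbk : b ∈ k := Multiset.mem_of_mem_erase hb
        have ha1 : 1 ≤ a := hpos a ha
        have hb1 : 1 ≤ b := hpos b hbk
        have hc2 : b ::ₘ (k.erase a).erase b = k.erase a := Multiset.cons_erase hb
        have hc1 : a ::ₘ b ::ₘ (k.erase a).erase b = k := by
          rw [hc2]; exact Multiset.cons_erase ha
        have hkcard : Multiset.card k = Multiset.card ((k.erase a).erase b) + 2 := by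
          rw [← hc1]; simp
        have hksum : k.sum = a + (b + ((k.erase a).erase b).sum) := by
          rw [← hc1]; simp
        have hrcut : cjR g ((a+b) ::ₘ (k.erase a).erase b) = N := by
          rw [cjR] at hreq
          simp only [cjR, Multiset.card_cons, Multiset.sum_cons]
          omega
        have hcmem : h g ((a+b) ::ₘ (k.erase a).erase b) ∈ S := by
          apply IH g _ (Multiset.cons_ne_zero) _ (le_of_eq hrcut)
          intro hmem
          rcases Multiset.mem_cons.1 hmem with h0 | h0
          · omega
          · exact hk0 (Multiset.mem_of_mem_erase (Multiset.mem_of_mem_erase h0))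
        refine ⟨((a+b : ℕ) : ℚ) * ((((k.erase a).erase b).count (a+b) + 1 : ℕ) : ℚ)
            * h g ((a+b) ::ₘ (k.erase a).erase b),
          S.mul_mem (S.mul_mem (natCast_mem S _) (natCast_mem S _)) hcmem, ?_⟩
        rw [cjH, hrcut, cjAut_cons]
        push_cast
        field_simp
      -- Claim J
      obtain ⟨w, hwS, hw⟩ : ∃ w ∈ S, (N.factorial : ℚ) * J = (cjAut k : ℚ) * w := by
        rw [hJdef, ← Multiset.sum_map_mul_left]
        apply cjG1
        intro a ha
        beta_reduce
        have ha1 : 1 ≤ a := hpos a ha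
        have hce : a ::ₘ k.erase a = k := Multiset.cons_erase ha
        have hkcard : Multiset.card k = Multiset.card (k.erase a) + 1 := by
          rw [← hce]; simp
        have hksum : k.sum = a + (k.erase a).sum := by rw [← hce]; simp
        have hepos : ∀ x ∈ k.erase a, 1 ≤ x := fun x hx =>
          hpos x (Multiset.mem_of_mem_erase hx)
        rw [Finset.mul_sum]
        apply cjHFin
        intro α hα
        obtain ⟨hα1, hαa⟩ := Finset.mem_Ioo.1 hα
        obtain ⟨yj, hyjS, hyj⟩ : ∃ yj ∈ S,
            (N.factorial : ℚ) * (if 1 ≤ g then cjH h (g-1) (α ::ₘ (a-α) ::ₘ k.erase a) else 0)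
              = (cjAut (k.erase a) : ℚ) * yj := by
          by_cases hg : 1 ≤ g
          · rw [if_pos hg]
            have hrj : cjR (g-1) (α ::ₘ (a-α) ::ₘ k.erase a) = N := by
              rw [cjR] at hreq
              simp only [cjR, Multiset.card_cons, Multiset.sum_cons]
              omega
            have hmem : h (g-1) (α ::ₘ (a-α) ::ₘ k.erase a) ∈ S := by
              apply IH _ _ (Multiset.cons_ne_zero) _ (le_of_eq hrj)
              intro hmem
              rcases Multiset.mem_cons.1 hmem with h0 | h0
              · omega
              rcases Multiset.mem_cons.1 h0 with h0' | h0'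
              · omega
              · exact absurd (hepos 0 h0') (by omega)
            refine ⟨(((((a-α) ::ₘ k.erase a).count α + 1) * ((k.erase a).count (a-α) + 1) : ℕ) : ℚ)
                * h (g-1) (α ::ₘ (a-α) ::ₘ k.erase a),
              S.mul_mem (natCast_mem S _) hmem, ?_⟩
            rw [cjH, hrj, cjAut_cons, cjAut_cons]
            push_cast
            field_simp
          · exact ⟨0, S.zero_mem, by rw [if_neg hg]; ring⟩
        obtain ⟨ys, hysS, hys⟩ : ∃ ys ∈ S,
            (N.factorial : ℚ) * (∑ g₁ ∈ Finset.range (g+1),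
              ((k.erase a).powerset.map fun m =>
                cjH h g₁ (α ::ₘ m) * cjH h (g - g₁) ((a-α) ::ₘ (k.erase a - m))).sum)
            = (cjAut (k.erase a) : ℚ) * ys := by
          rw [Finset.mul_sum]
          apply cjHFin
          intro g₁ hg₁
          have hg₁g : g₁ ≤ g := Nat.lt_succ_iff.1 (Finset.mem_range.1 hg₁)
          rw [← Multiset.sum_map_mul_left]
          apply cjG2
          intro m hme
          beta_reduce
          have hms : k.erase a - m + m = k.erase a := tsub_add_cancel_of_le hme
          have hcardm : Multiset.card (k.erase a - m) + Multiset.card m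
              = Multiset.card (k.erase a) := by
            conv_rhs => rw [← hms]
            rw [Multiset.card_add]
          have hsumm : (k.erase a - m).sum + m.sum = (k.erase a).sum := by
            conv_rhs => rw [← hms]
            rw [Multiset.sum_add]
          have hr12 : cjR g₁ (α ::ₘ m) + cjR (g - g₁) ((a-α) ::ₘ (k.erase a - m)) = N := by
            rw [cjR] at hreq
            simp only [cjR, Multiset.card_cons, Multiset.sum_cons]
            omega
          have hr1le : cjR g₁ (α ::ₘ m) ≤ N := by omega
          have hm1 : h g₁ (α ::ₘ m) ∈ S := by
            apply IH _ _ (Multiset.cons_ne_zero) _ hr1le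
            intro hmem
            rcases Multiset.mem_cons.1 hmem with h0 | h0
            · omega
            · exact absurd (hepos 0 (Multiset.mem_of_le hme h0)) (by omega)
          have hm2 : h (g - g₁) ((a-α) ::ₘ (k.erase a - m)) ∈ S := by
            apply IH _ _ (Multiset.cons_ne_zero) _ (by omega)
            intro hmem
            rcases Multiset.mem_cons.1 hmem with h0 | h0
            · omega
            · exact absurd (hepos 0 (Multiset.mem_of_le tsub_le_self h0)) (by omega)
          have hch : (N.factorial : ℚ)
              = (N.choose (cjR g₁ (α ::ₘ m)) : ℚ) * ((cjR g₁ (α ::ₘ m)).factorial : ℚ)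
                * ((cjR (g - g₁) ((a-α) ::ₘ (k.erase a - m))).factorial : ℚ) := by
            have := Nat.choose_mul_factorial_mul_factorial hr1le
            have h2' : N - cjR g₁ (α ::ₘ m) = cjR (g - g₁) ((a-α) ::ₘ (k.erase a - m)) := by
              omega
            rw [h2'] at this
            exact_mod_cast this.symm
          have hf1 : ((cjR g₁ (α ::ₘ m)).factorial : ℚ) ≠ 0 :=
            Nat.cast_ne_zero.2 (Nat.factorial_pos _).ne'
          have hf2 : ((cjR (g - g₁) ((a-α) ::ₘ (k.erase a - m))).factorial : ℚ) ≠ 0 :=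
            Nat.cast_ne_zero.2 (Nat.factorial_pos _).ne'
          refine ⟨(((m.count α + 1) * ((k.erase a - m).count (a-α) + 1)
                * (N.choose (cjR g₁ (α ::ₘ m))) : ℕ) : ℚ)
              * (h g₁ (α ::ₘ m) * h (g - g₁) ((a-α) ::ₘ (k.erase a - m))),
            S.mul_mem (natCast_mem S _) (S.mul_mem hm1 hm2), ?_⟩
          rw [cjH, cjH, cjAut_cons, cjAut_cons, hch]
          push_cast
          field_simp
        refine ⟨(α : ℚ) * ((a - α : ℕ) : ℚ) * (yj + ys),
          S.mul_mem (S.mul_mem (natCast_mem S _) (natCast_mem S _)) (S.add_mem hyjS hysS), ?_⟩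
        have hexp : (N.factorial : ℚ) * ((α : ℚ) * ((a - α : ℕ) : ℚ) *
              ((if 1 ≤ g then cjH h (g-1) (α ::ₘ (a-α) ::ₘ k.erase a) else 0)
                + ∑ g₁ ∈ Finset.range (g+1),
                  ((k.erase a).powerset.map fun m =>
                    cjH h g₁ (α ::ₘ m) * cjH h (g - g₁) ((a-α) ::ₘ (k.erase a - m))).sum))
            = (α : ℚ) * ((a - α : ℕ) : ℚ) *
                ((N.factorial : ℚ) * (if 1 ≤ g then cjH h (g-1) (α ::ₘ (a-α) ::ₘ k.erase a) else 0)
                + (N.factorial : ℚ) * (∑ g₁ ∈ Finset.range (g+1),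
                  ((k.erase a).powerset.map fun m =>
                    cjH h g₁ (α ::ₘ m) * cjH h (g - g₁) ((a-α) ::ₘ (k.erase a - m))).sum)) := by
          ring
        rw [hexp, hyj, hys]
        ring
      -- Final assembly
      have hAutne : (cjAut k : ℚ) ≠ 0 := Nat.cast_ne_zero.2 (cjAut_pos k).ne'
      have e1 : (N.factorial : ℚ) * ((cjR g k : ℚ) * cjH h g k) = (cjAut k : ℚ) * h g k := by
        rw [hreq, cjH, hreq, Nat.factorial_succ]
        push_cast
        field_simp
      have hfinal : (cjAut k : ℚ) * h g k = (cjAut k : ℚ) * ((1/2) * (z + w)) := by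
        calc (cjAut k : ℚ) * h g k
            = (N.factorial : ℚ) * ((cjR g k : ℚ) * cjH h g k) := e1.symm
          _ = (N.factorial : ℚ) * ((1/2) * C + (1/2) * J) := by rw [hE]
          _ = (1/2) * ((N.factorial : ℚ) * C) + (1/2) * ((N.factorial : ℚ) * J) := by ring
          _ = (1/2) * ((cjAut k : ℚ) * z) + (1/2) * ((cjAut k : ℚ) * w) := by rw [hz, hw]
          _ = (cjAut k : ℚ) * ((1/2) * (z + w)) := by ring
      have hfin := mul_left_cancel₀ hAutne hfinal
      rw [hfin]
      exact S.mul_mem hhalf (S.add_mem hzS hwS)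
end
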